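/- In the covering system of 63 blocks arising from an equitable 2-partition of Q_{12} with quotient matrix [[3,9],[7,5]], each pair of distinct coordinates belongs to an even number (0, 2, or 4) of bitriples. -/

import Mathlib

attribute [local instance] Classical.propDecidable
noncomputable section

/-- Vertices of the `n`-cube: binary words of length `n` over GF(2). -/
abbrev Vtx (n : ℕ) := Fin n → ZMod 2

/-- The (Hamming) weight of a word: the number of ones. -/
def wt {n : ℕ} (x : Vtx n) : ℕ := (Finset.univ.filter (fun i => x i = 1)).card

/-- The inner product `x₁y₁ + ⋯ + xₙyₙ` computed as a natural number. -/
def ip {n : ℕ} (x y : Vtx n) : ℕ := ∑ i, (x i).val * (y i).val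

/-- The character `χ_y(x) = (−1)^⟨x,y⟩`. -/
def chi {n : ℕ} (y x : Vtx n) : ℚ := (-1) ^ ip x y

/-- `leq z x` means `z ≼ x`, i.e. `zᵢ ≤ xᵢ` for all `i`. -/
def leq {n : ℕ} (x y : Vtx n) : Prop := ∀ i, (x i).val ≤ (y i).val

/-- The Fourier coefficient `f̂(y) = 2^{−n} Σ_z f(z)(−1)^⟨z,y⟩`. -/
def hat {n : ℕ} (f : Vtx n → ℚ) (y : Vtx n) : ℚ :=
  (∑ z, f z * (-1 : ℚ) ^ ip z y) / 2 ^ n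

/-- Adjacency in the `n`-cube: the words differ in exactly one coordinate. -/
def adj {n : ℕ} (x y : Vtx n) : Prop :=
  (Finset.univ.filter (fun i => x i ≠ y i)).card = 1

/-- `(C0, complement of C0)` is an equitable partition with quotient matrix
`[[a,b],[c,d]]`. -/
def IsEqPartition {n : ℕ} (C0 : Finset (Vtx n)) (a b c d : ℕ) : Prop :=
  (∀ x ∈ C0, (Finset.univ.filter (fun y => adj x y ∧ y ∈ C0)).card = a ∧
             (Finset.univ.filter (fun y => adj x y ∧ y ∉ C0)).card = b) ∧
  (∀ x ∉ C0, (Finset.univ.filter (fun y => adj x y ∧ y ∈ C0)).card = c ∧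
             (Finset.univ.filter (fun y => adj x y ∧ y ∉ C0)).card = d)

/-- The associated function of an equitable partition: `b` on `C0`, `−c` outside. -/
def assoc {n : ℕ} (C0 : Finset (Vtx n)) (b c : ℕ) : Vtx n → ℚ :=
  fun x => if x ∈ C0 then (b : ℚ) else -(c : ℚ)

/-- The face `Γ_u^v = {z + v : z ≼ u}` (of dimension `wt u`). -/
def face {n : ℕ} (u v : Vtx n) : Finset (Vtx n) :=
  Finset.univ.filter (fun x => ∃ z, leq z u ∧ x = z + v)

/-- The set of nonzeros of the Fourier transform of the associated function. -/
def nonzeros (C0 : Finset (Vtx 12)) : Finset (Vtx 12) :=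
  Finset.univ.filter (fun x : Vtx 12 => hat (assoc C0 9 7) x ≠ 0)

/-- The number of blocks (quadruples of zero coordinates of nonzeros)
containing the triple (or set) `T` of coordinates. -/
def cnt (C0 : Finset (Vtx 12)) (T : Finset (Fin 12)) : ℕ :=
  ((nonzeros C0).filter (fun x => ∀ i ∈ T, x i = 0)).card


/-!
The associated function `f = assoc C0 9 7` satisfies `∑ᵢ f (x + eᵢ) = -4 f x`, so its Fourier
transform lives on the words of weight `8`. Their zero sets are the blocks, and the coefficient
at the word with zero set `S` is the integer `M S = #{z ∈ C0 | supp z ⊆ S} - 7`: summing `f̂` over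
the words vanishing on `U` averages `f` over the words supported in `U`. This makes
`∑_{S ⊇ U} M S` odd whenever `#U ≤ 3`.

For a coordinate `i`, the function `r x = (f x + f (x + eᵢ)) / 2` takes only the values `9, 1, -7`,
and its Fourier series uses only the words vanishing at `i`. No three of those with nonzero
coefficient sum to `0`, so `∑ r³ = 0`, and `r³ = 3r² + 61r - 63` then gives `∑_{S ∋ i} M S ² = 21`.
Hence the `55` triples through `i` are each covered an odd number of times and `63` times in all:
a slack of `8`, which forces `M S ∈ {-1, 0, 1}`. Through a pair pass `10` triples covered `2W` times
with `W` odd, and their slack `2W - 10 ≤ 8` is `0`, `4` or `8`.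
-/

open Finset

namespace BooleanCube

variable {n : ℕ}

lemma zmod2_cases (a : ZMod 2) : a = 0 ∨ a = 1 := by
  revert a; decide

lemma zmod2_ne_iff {a b : ZMod 2} : a ≠ b ↔ b = a + 1 := by
  revert a b; decide

lemma add_self_eq_zero (a : Vtx n) : a + a = 0 :=
  funext fun j => CharTwo.add_self_eq_zero (a j)

lemma add_eq_zero_iff_eq {a b : Vtx n} : a + b = 0 ↔ a = b := by
  rw [add_eq_zero_iff_eq_neg, neg_eq_of_add_eq_zero_left (add_self_eq_zero b)]

lemma neg_one_pow_eq_of_cast_eq {a b : ℕ} (h : (a : ZMod 2) = b) :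
    (-1 : ℚ) ^ a = (-1) ^ b := by
  rw [neg_one_pow_eq_pow_mod_two, neg_one_pow_eq_pow_mod_two (n := b),
    (ZMod.natCast_eq_natCast_iff' a b 2).mp h]

lemma ip_cast (x y : Vtx n) : (ip x y : ZMod 2) = x ⬝ᵥ y := by
  simp [ip, dotProduct]

lemma chi_comm (y x : Vtx n) : chi y x = chi x y := by
  simp only [chi, ip, mul_comm]

lemma chi_add (y x z : Vtx n) : chi y (x + z) = chi y x * chi y z := by
  rw [chi, chi, chi, ← pow_add]
  apply neg_one_pow_eq_of_cast_eq
  push_cast [ip_cast]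
  exact add_dotProduct x z y

lemma chi_add_left (y y' x : Vtx n) : chi (y + y') x = chi y x * chi y' x := by
  rw [chi_comm, chi_add, chi_comm x, chi_comm x]

lemma chi_zero_right (y : Vtx n) : chi y 0 = 1 := by
  simp [chi, ip]

lemma chi_single (y : Vtx n) (i : Fin n) : chi y (Pi.single i 1) = (-1) ^ (y i).val := by
  rw [chi, ip, sum_eq_single i (fun j _ hj => by simp [hj]) (by simp)]
  simp [ZMod.val_one]

lemma sum_mul_chi_add_right (g : Vtx n → ℚ) (y a : Vtx n) :
    ∑ x, g (x + a) * chi y x = chi y a * ∑ x, g x * chi y x := by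
  rw [Fintype.sum_equiv (Equiv.addRight a) _ (fun x => g x * chi y (x + a)) fun x => by
    rw [Equiv.coe_addRight, add_assoc, add_self_eq_zero, add_zero], mul_sum]
  exact sum_congr rfl fun x _ => by rw [chi_add]; ring

/-- `vanishing Uᶜ` is the set of words supported in `U`. -/
def vanishing (U : Finset (Fin n)) : Finset (Vtx n) :=
  univ.filter fun y => ∀ i ∈ U, y i = 0

lemma mem_vanishing {U : Finset (Fin n)} {y : Vtx n} : y ∈ vanishing U ↔ ∀ i ∈ U, y i = 0 := by
  simp [vanishing]

lemma card_vanishing (U : Finset (Fin n)) : #(vanishing U) = 2 ^ (n - #U) := by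
  have : vanishing U = Fintype.piFinset fun j => if j ∈ U then {0} else univ := by
    ext y
    simp only [mem_vanishing, Fintype.mem_piFinset]
    refine ⟨fun h j => ?_, fun h j hj => by simpa [hj] using h j⟩
    by_cases hj : j ∈ U <;> simp [hj, h]
  rw [this, Fintype.card_piFinset]
  simp only [apply_ite (f := Finset.card), card_singleton, card_univ, ZMod.card, prod_ite,
    prod_const_one, one_mul, prod_const, filter_not, filter_mem_eq_inter, univ_inter,
    ← compl_eq_univ_sdiff, card_compl, Fintype.card_fin]

lemma card_vanishing_compl (U : Finset (Fin n)) : #(vanishing Uᶜ) = 2 ^ #U := by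
  rw [card_vanishing, card_compl, Fintype.card_fin,
    Nat.sub_sub_self (by simpa using card_le_univ U)]

lemma vanishing_compl_singleton (i : Fin n) :
    vanishing ({i}ᶜ : Finset (Fin n)) = {0, Pi.single i 1} := by
  ext z
  simp only [mem_vanishing, mem_compl, mem_singleton, mem_insert, funext_iff, Pi.zero_apply]
  constructor
  · intro hz
    rcases zmod2_cases (z i) with h | h
    · exact Or.inl fun j => by by_cases hj : j = i <;> simp_all
    · exact Or.inr fun j => by by_cases hj : j = i <;> simp_all
  · rintro (hz | hz) j hj <;> simp [hz, hj]

lemma chi_eq_one_of_mem_vanishing {U : Finset (Fin n)} {y z : Vtx n} (hy : y ∈ vanishing U)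
    (hz : z ∈ vanishing Uᶜ) : chi y z = 1 := by
  rw [mem_vanishing] at hy hz
  have : ip z y = 0 := sum_eq_zero fun j _ => by
    by_cases hj : j ∈ U
    · simp [hy j hj]
    · simp [hz j (mem_compl.mpr hj)]
  rw [chi, this, pow_zero]

lemma sum_vanishing_chi (U : Finset (Fin n)) (z : Vtx n) :
    ∑ y ∈ vanishing U, chi y z = if z ∈ vanishing Uᶜ then 2 ^ (n - #U) else 0 := by
  split_ifs with hz
  · rw [sum_congr rfl fun y hy => chi_eq_one_of_mem_vanishing hy hz, sum_const, card_vanishing]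
    simp
  · obtain ⟨i, hiU, hzi⟩ : ∃ i ∉ U, z i ≠ 0 := by simpa [mem_vanishing] using hz
    -- translating by the `i`-th unit vector preserves `vanishing U` and flips the sign of `chi · z`
    have hflip := sum_equiv (Equiv.addRight (Pi.single i 1)) (s := vanishing U) (t := vanishing U)
      (f := fun y => chi y z) (g := fun y => - chi y z)
      (fun y => by
        simp only [mem_vanishing, Equiv.coe_addRight, Pi.add_apply]
        refine forall₂_congr fun j hj => ?_
        simp [show j ≠ i by rintro rfl; exact hiU hj])
      (fun y _ => by
        rw [Equiv.coe_addRight, chi_add_left, chi_comm (Pi.single i 1), chi_single,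
          (zmod2_cases (z i)).resolve_left hzi, ZMod.val_one]
        ring)
    rw [sum_neg_distrib] at hflip
    linarith

lemma sum_chi (y : Vtx n) : ∑ x, chi y x = if y = 0 then 2 ^ n else 0 := by
  have h := sum_vanishing_chi (∅ : Finset (Fin n)) y
  have h_univ : vanishing (∅ : Finset (Fin n)) = univ := by ext; simp [mem_vanishing]
  have h_zero : y ∈ vanishing (∅ : Finset (Fin n))ᶜ ↔ y = 0 := by simp [mem_vanishing, funext_iff]
  rw [h_univ, card_empty, Nat.sub_zero] at h
  simp only [h_zero] at h
  rw [← h]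
  exact sum_congr rfl fun x _ => chi_comm y x

lemma hat_mul_chi (f : Vtx n → ℚ) (y x : Vtx n) :
    hat f y * chi y x = (∑ z, f (z + x) * chi y z) / 2 ^ n := by
  change (∑ z, f z * chi y z) / 2 ^ n * chi y x = _
  rw [sum_mul_chi_add_right]
  ring

lemma sum_vanishing_hat_mul_chi (f : Vtx n → ℚ) (U : Finset (Fin n)) (x : Vtx n) :
    ∑ y ∈ vanishing U, hat f y * chi y x = (∑ z ∈ vanishing Uᶜ, f (z + x)) / 2 ^ #U := by
  have hU : #U ≤ n := by simpa using card_le_univ U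
  simp only [hat_mul_chi, ← sum_div]
  rw [sum_comm]
  simp only [← mul_sum, sum_vanishing_chi, mul_ite, mul_zero, sum_ite_mem, univ_inter, ← sum_mul]
  rw [div_eq_div_iff (by positivity) (by positivity), mul_assoc, ← pow_add, Nat.sub_add_cancel hU]

lemma sum_chi_single (y : Vtx n) : ∑ i, chi y (Pi.single i 1) = n - 2 * wt y := by
  have h (a : ZMod 2) : (-1 : ℚ) ^ a.val = 1 - 2 * if a = 1 then 1 else 0 := by
    rcases zmod2_cases a with rfl | rfl <;> norm_num [ZMod.val_one]
  simp only [chi_single, h, sum_sub_distrib, ← mul_sum, sum_boole, wt]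
  simp

lemma hat_sum_add_single (f : Vtx n → ℚ) (y : Vtx n) :
    hat (fun x => ∑ i, f (x + Pi.single i 1)) y = (n - 2 * wt y) * hat f y := by
  change (∑ x, (∑ i, f (x + Pi.single i 1)) * chi y x) / 2 ^ n
    = (n - 2 * wt y) * ((∑ x, f x * chi y x) / 2 ^ n)
  simp only [sum_mul]
  rw [sum_comm]
  simp only [sum_mul_chi_add_right, ← sum_mul]
  rw [sum_chi_single, mul_div_assoc]

lemma wt_of_hat_ne_zero {f : Vtx n → ℚ} {μ : ℚ} (hf : ∀ x, ∑ i, f (x + Pi.single i 1) = μ * f x)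
    {y : Vtx n} (hy : hat f y ≠ 0) : (n : ℚ) - 2 * wt y = μ := by
  have h := hat_sum_add_single f y
  simp only [hf] at h
  change (∑ x, μ * f x * chi y x) / 2 ^ n = _ at h
  simp only [mul_assoc, ← mul_sum, mul_div_assoc] at h
  exact (mul_right_cancel₀ hy h).symm

lemma ones_le_two_of_add_add_eq_zero {a b c : ZMod 2} (h : a + b + c = 0) :
    (if a = 1 then 1 else 0) + (if b = 1 then 1 else 0) + (if c = 1 then 1 else 0) ≤ 2 := by
  revert a b c; decide

/-- In each coordinate at most two of three words summing to zero are `1`, and none is at a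
common zero. -/
lemma wt_add_wt_add_wt_le {y₁ y₂ y₃ : Vtx n} (hsum : y₁ + y₂ + y₃ = 0) {i : Fin n}
    (h₁ : y₁ i = 0) (h₂ : y₂ i = 0) : wt y₁ + wt y₂ + wt y₃ ≤ 2 * (n - 1) := by
  set c : Fin n → ℕ := fun j =>
    (if y₁ j = 1 then 1 else 0) + (if y₂ j = 1 then 1 else 0) + (if y₃ j = 1 then 1 else 0)
  have hsum_at (j : Fin n) : y₁ j + y₂ j + y₃ j = 0 := congrFun hsum j
  have h₃ : y₃ i = 0 := by simpa [h₁, h₂] using hsum_at i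
  have hci : c i = 0 := by simp [c, h₁, h₂, h₃]
  calc wt y₁ + wt y₂ + wt y₃ = ∑ j, c j := by simp only [wt, card_filter, sum_add_distrib, c]
    _ = ∑ j ∈ univ.erase i, c j := by rw [← add_sum_erase _ _ (mem_univ i), hci, zero_add]
    _ ≤ #(univ.erase i) • 2 :=
        sum_le_card_nsmul _ _ _ fun j _ => ones_le_two_of_add_add_eq_zero (hsum_at j)
    _ = 2 * (n - 1) := by simp [mul_comm]

lemma sum_sq_sum_mul_chi (s : Finset (Vtx n)) (c : Vtx n → ℚ) :
    ∑ x, (∑ y ∈ s, c y * chi y x) ^ 2 = 2 ^ n * ∑ y ∈ s, c y ^ 2 := by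
  simp only [sq, sum_mul, mul_sum]
  rw [sum_comm]
  refine sum_congr rfl fun y₁ hy₁ => ?_
  rw [sum_comm]
  have hpair (y₂ x : Vtx n) :
      c y₂ * chi y₂ x * (c y₁ * chi y₁ x) = c y₂ * c y₁ * chi (y₂ + y₁) x := by
    rw [chi_add_left]; ring
  simp only [hpair, ← mul_sum, sum_chi, add_eq_zero_iff_eq, mul_ite, mul_zero, sum_ite_eq', hy₁,
    if_true]
  ring

lemma sum_cube_sum_mul_chi (s : Finset (Vtx n)) (c : Vtx n → ℚ)
    (hs : ∀ y₁ ∈ s, ∀ y₂ ∈ s, ∀ y₃ ∈ s, c y₁ ≠ 0 → c y₂ ≠ 0 → c y₃ ≠ 0 → y₁ + y₂ + y₃ ≠ 0) :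
    ∑ x, (∑ y ∈ s, c y * chi y x) ^ 3 = 0 := by
  simp only [pow_succ, pow_zero, one_mul, sum_mul, mul_sum]
  rw [sum_comm]
  refine sum_eq_zero fun y₁ h₁ => ?_
  rw [sum_comm]
  refine sum_eq_zero fun y₂ h₂ => ?_
  rw [sum_comm]
  refine sum_eq_zero fun y₃ h₃ => ?_
  have htriple (x : Vtx n) : c y₃ * chi y₃ x * (c y₂ * chi y₂ x) * (c y₁ * chi y₁ x)
      = c y₃ * c y₂ * c y₁ * chi (y₃ + y₂ + y₁) x := by
    rw [chi_add_left, chi_add_left]; ring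
  simp only [htriple, ← mul_sum, sum_chi]
  by_cases hc : c y₃ ≠ 0 ∧ c y₂ ≠ 0 ∧ c y₁ ≠ 0
  · rw [if_neg (hs y₃ h₃ y₂ h₂ y₁ h₁ hc.1 hc.2.1 hc.2.2), mul_zero]
  · simp only [not_and_or, not_not] at hc
    rcases hc with h | h | h <;> simp [h]

def zeros (y : Vtx n) : Finset (Fin n) := univ.filter fun j => y j = 0

def ofZeros (S : Finset (Fin n)) : Vtx n := fun j => if j ∈ S then 0 else 1

def zerosEquiv : Vtx n ≃ Finset (Fin n) where
  toFun := zeros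
  invFun := ofZeros
  left_inv y := funext fun j => by
    rcases zmod2_cases (y j) with h | h <;> simp [zeros, ofZeros, h]
  right_inv S := by
    ext j
    by_cases hj : j ∈ S <;> simp [zeros, ofZeros, hj]

lemma card_zeros_add_wt (y : Vtx n) : #(zeros y) + wt y = n := by
  have hones : univ.filter (fun j => y j = 1) = univ.filter (fun j => ¬ y j = 0) :=
    filter_congr fun j _ => by rcases zmod2_cases (y j) with h | h <;> simp [h]
  rw [zeros, wt, hones, card_filter_add_card_filter_not, card_univ, Fintype.card_fin]

lemma mem_vanishing_iff_subset_zeros {U : Finset (Fin n)} {y : Vtx n} :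
    y ∈ vanishing U ↔ U ⊆ zeros y := by
  simp [mem_vanishing, zeros, subset_iff]

def supersets (k : ℕ) (U : Finset (Fin n)) : Finset (Finset (Fin n)) :=
  (univ.powersetCard k).filter (U ⊆ ·)

lemma mem_supersets {k : ℕ} {U S : Finset (Fin n)} : S ∈ supersets k U ↔ #S = k ∧ U ⊆ S := by
  simp [supersets]

lemma card_supersets {k : ℕ} {U : Finset (Fin n)} (hU : #U ≤ k) :
    #(supersets k U) = (n - #U).choose (k - #U) := by
  rw [supersets, card_filter_powersetCard_subset U univ k (subset_univ U) hU, card_univ,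
    Fintype.card_fin]

lemma supersets_card_self (S : Finset (Fin n)) : supersets #S S = {S} := by
  ext T
  simp only [mem_supersets, mem_singleton]
  exact ⟨fun ⟨hT, hST⟩ => (eq_of_subset_of_card_le hST hT.le).symm,
    fun hT => hT ▸ ⟨rfl, subset_rfl⟩⟩

lemma sum_vanishing_eq_sum_supersets {M : Type*} [AddCommMonoid M] (g : Vtx n → M) {k : ℕ}
    (hg : ∀ y, g y ≠ 0 → #(zeros y) = k) (U : Finset (Fin n)) :
    ∑ y ∈ vanishing U, g y = ∑ S ∈ supersets k U, g (ofZeros S) := by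
  rw [← sum_filter_of_ne fun y _ hy => hg y hy]
  exact sum_equiv zerosEquiv (fun y => by simp [mem_vanishing_iff_subset_zeros, mem_supersets,
    zerosEquiv, and_comm]) fun y _ => congrArg g (zerosEquiv.symm_apply_apply y).symm

/-- Each `(k+1)`-set containing `U` has `k + 1 - #U` subsets of size `k` containing `U`. -/
lemma sum_supersets_sum_supersets_succ {M : Type*} [AddCommMonoid M]
    (g : Finset (Fin n) → M) {k : ℕ} {U : Finset (Fin n)} (hU : #U ≤ k) :
    ∑ T ∈ supersets k U, ∑ S ∈ supersets (k + 1) T, g S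
      = (k + 1 - #U) • ∑ S ∈ supersets (k + 1) U, g S := by
  rw [sum_comm' (t' := supersets (k + 1) U) (s' := fun S => (S.powersetCard k).filter (U ⊆ ·))
    fun T S => by
      simp only [mem_supersets, mem_filter, mem_powersetCard]
      exact ⟨fun ⟨⟨hT, hUT⟩, hS, hTS⟩ => ⟨⟨⟨hTS, hT⟩, hUT⟩, hS, hUT.trans hTS⟩,
        fun ⟨⟨⟨hTS, hT⟩, hUT⟩, hS, _⟩ => ⟨⟨hT, hUT⟩, hS, hTS⟩⟩]
  rw [smul_sum]
  refine sum_congr rfl fun S hS => ?_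
  rw [mem_supersets] at hS
  rw [sum_const, card_filter_powersetCard_subset U S k hS.2 hU, hS.1,
    show k + 1 - #U = (k - #U) + 1 by omega, Nat.choose_succ_self_right]

lemma adj_iff {x y : Vtx n} : adj x y ↔ ∃ i, y = x + Pi.single i 1 := by
  rw [adj, card_eq_one]
  refine exists_congr fun i => ?_
  simp only [Finset.ext_iff, mem_filter, mem_univ, true_and, mem_singleton, funext_iff,
    Pi.add_apply, Pi.single_apply]
  refine forall_congr' fun j => ?_
  by_cases hj : j = i
  · simp [hj, zmod2_ne_iff]
  · simp [hj, eq_comm]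

lemma sum_adj {M : Type*} [AddCommMonoid M] (g : Vtx n → M) (x : Vtx n) :
    ∑ y ∈ univ.filter (adj x), g y = ∑ i, g (x + Pi.single i 1) := by
  have : univ.filter (adj x) = univ.image fun i => x + Pi.single i 1 := by
    ext y
    simp [adj_iff, eq_comm]
  refine this ▸ sum_image fun i _ j _ hij => ?_
  have h := congrFun (add_left_cancel hij) i
  by_contra hne
  simp [Ne.symm hne] at h

lemma sum_assoc (C0 s : Finset (Vtx n)) (b c : ℕ) :
    ∑ z ∈ s, assoc C0 b c z = b * #(s.filter (· ∈ C0)) - c * #(s.filter (· ∉ C0)) := by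
  simp only [assoc, sum_ite, sum_const, nsmul_eq_mul]
  ring

def faceCount (C0 : Finset (Vtx n)) (U : Finset (Fin n)) : ℕ := #((vanishing Uᶜ).filter (· ∈ C0))

lemma sum_vanishing_hat_assoc (C0 : Finset (Vtx n)) (b c : ℕ) (U : Finset (Fin n)) :
    ∑ y ∈ vanishing U, hat (assoc C0 b c) y = (b + c) * faceCount C0 U / 2 ^ #U - c := by
  have hsplit := card_filter_add_card_filter_not (s := vanishing Uᶜ) (p := (· ∈ C0))
  rw [card_vanishing_compl] at hsplit
  have hsplit' : (faceCount C0 U : ℚ) + #((vanishing Uᶜ).filter (· ∉ C0)) = 2 ^ #U := by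
    exact_mod_cast hsplit
  have := sum_vanishing_hat_mul_chi (assoc C0 b c) U 0
  simp only [chi_zero_right, mul_one, add_zero, sum_assoc] at this
  rw [this, ← faceCount]
  field_simp
  linear_combination (-(c : ℚ)) * hsplit'

/-- The Fourier coefficient of `assoc C0 9 7` at `ofZeros S`, see `IsEqPartition.hat_ofZeros`. -/
def blockCoeff (C0 : Finset (Vtx 12)) (S : Finset (Fin 12)) : ℤ := faceCount C0 S - 7

lemma odd_sum_sq_iff {ι : Type*} (s : Finset ι) (g : ι → ℤ) :
    Odd (∑ a ∈ s, g a ^ 2) ↔ Odd (∑ a ∈ s, g a) := by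
  simp only [← ZMod.intCast_eq_one_iff_odd, Int.cast_sum, Int.cast_pow, ZMod.pow_card]

section Covering

variable (M : Finset (Fin n) → ℤ)

/-- The number of blocks (`4`-sets `S` with `M S ≠ 0`) containing `T`, once `M S ∈ {-1, 0, 1}`. -/
def cover (T : Finset (Fin n)) : ℤ := ∑ S ∈ supersets 4 T, M S ^ 2

lemma sum_supersets_cover {U : Finset (Fin n)} (hU : #U ≤ 3) :
    ∑ T ∈ supersets 3 U, cover M T = (4 - #U : ℕ) * ∑ S ∈ supersets 4 U, M S ^ 2 := by
  simp only [cover]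
  rw [sum_supersets_sum_supersets_succ _ hU, nsmul_eq_mul]

lemma cover_eq_card {T : Finset (Fin n)} (hM : ∀ S ∈ supersets 4 T, M S ^ 2 ≤ 1) :
    cover M T = #((supersets 4 T).filter (M · ≠ 0)) := by
  rw [cover, card_filter, Nat.cast_sum]
  refine sum_congr rfl fun S hS => ?_
  have := hM S hS
  split_ifs with h0
  · have : 0 < M S ^ 2 := by positivity
    push_cast
    omega
  · simp [not_not.mp h0]

variable {M} (hodd : ∀ U : Finset (Fin n), #U ≤ 3 → Odd (∑ S ∈ supersets 4 U, M S))
include hodd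

lemma odd_cover {T : Finset (Fin n)} (hT : #T ≤ 3) : Odd (cover M T) :=
  (odd_sum_sq_iff _ M).mpr (hodd T hT)

lemma one_le_cover {T : Finset (Fin n)} (hT : #T ≤ 3) : 1 ≤ cover M T := by
  obtain ⟨k, hk⟩ := odd_cover hodd hT
  have : 0 ≤ cover M T := sum_nonneg fun S _ => sq_nonneg (M S)
  omega

end Covering

section Twelve

variable {M : Finset (Fin 12) → ℤ} (hsq : ∀ i, ∑ S ∈ supersets 4 {i}, M S ^ 2 = 21)
include hsq

lemma sum_supersets_singleton_cover_sub_one (i : Fin 12) :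
    ∑ T ∈ supersets 3 {i}, (cover M T - 1) = 8 := by
  rw [sum_sub_distrib, sum_supersets_cover M (by simp), hsq, sum_const,
    card_supersets (by simp)]
  simp [Nat.choose_two_right]

variable (hodd : ∀ U : Finset (Fin 12), #U ≤ 3 → Odd (∑ S ∈ supersets 4 U, M S))
include hodd

lemma sq_le_one {S : Finset (Fin 12)} (hS : #S = 4) : M S ^ 2 ≤ 1 := by
  by_contra! hbig
  have h4 : 4 ≤ M S ^ 2 := by
    rcases (by omega : M S ≤ -2 ∨ (-1 ≤ M S ∧ M S ≤ 1) ∨ 2 ≤ M S) with h | h | h <;> nlinarith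
  obtain ⟨i, hi⟩ : S.Nonempty := card_pos.mp (by omega)
  -- the three triples `{i} ⊆ T ⊆ S` each use up at least `4` of the slack `8` at `i`
  set TT := (S.powersetCard 3).filter ({i} ⊆ ·)
  have hTT : #TT = 3 := by
    rw [card_filter_powersetCard_subset _ _ _ (singleton_subset_iff.mpr hi) (by simp), hS]
    simp
  have hTT_sub : TT ⊆ supersets 3 {i} := fun T hT => by
    simp only [TT, mem_filter, mem_powersetCard] at hT
    exact mem_supersets.mpr ⟨hT.1.2, hT.2⟩
  have hle : ∑ T ∈ TT, (cover M T - 1) ≤ 8 := by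
    rw [← sum_supersets_singleton_cover_sub_one hsq i]
    exact sum_le_sum_of_subset_of_nonneg hTT_sub fun T hT _ =>
      sub_nonneg.mpr (one_le_cover hodd (mem_supersets.mp hT).1.le)
  have hge (T) (hT : T ∈ TT) : 4 ≤ cover M T - 1 := by
    simp only [TT, mem_filter, mem_powersetCard] at hT
    have hST : M S ^ 2 ≤ cover M T :=
      single_le_sum (f := fun S => M S ^ 2) (fun _ _ => sq_nonneg _)
        (mem_supersets.mpr ⟨hS, hT.1.1⟩)
    obtain ⟨k, hk⟩ := odd_cover hodd hT.1.2.le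
    omega
  have := card_nsmul_le_sum TT _ 4 hge
  rw [hTT, nsmul_eq_mul, Nat.cast_ofNat] at this
  omega

theorem exists_sum_supersets_pair (P : Finset (Fin 12)) (hP : #P = 2) :
    ∃ m : ℕ, (m = 0 ∨ m = 2 ∨ m = 4) ∧
      ∑ T ∈ supersets 3 P, (#((supersets 4 T).filter (M · ≠ 0)) - 1) = 2 * m := by
  have hcover (T) (hT : T ∈ supersets 3 P) :
      ((#((supersets 4 T).filter (M · ≠ 0)) - 1 : ℕ) : ℤ) = cover M T - 1 := by
    have h1 := one_le_cover hodd (mem_supersets.mp hT).1.le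
    rw [cover_eq_card M fun S hS => sq_le_one hsq hodd (mem_supersets.mp hS).1] at h1 ⊢
    omega
  obtain ⟨k, hk⟩ := (odd_sum_sq_iff _ M).mpr (hodd P (by omega))
  have hsum : ∑ T ∈ supersets 3 P, (cover M T - 1) = 4 * k - 8 := by
    rw [sum_sub_distrib, sum_supersets_cover M (by omega), hk, sum_const,
      card_supersets (by omega), hP]
    simp only [Nat.reduceSub, Nat.cast_ofNat, Nat.choose_one_right, Int.nsmul_eq_mul, mul_one]
    ring
  obtain ⟨i, hi⟩ : P.Nonempty := card_pos.mp (by omega)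
  have hle : ∑ T ∈ supersets 3 P, (cover M T - 1) ≤ 8 := by
    rw [← sum_supersets_singleton_cover_sub_one hsq i]
    refine sum_le_sum_of_subset_of_nonneg (fun T hT => ?_) fun T hT _ =>
      sub_nonneg.mpr (one_le_cover hodd (mem_supersets.mp hT).1.le)
    exact mem_supersets.mpr ⟨(mem_supersets.mp hT).1,
      (singleton_subset_iff.mpr hi).trans (mem_supersets.mp hT).2⟩
  have hge : 0 ≤ ∑ T ∈ supersets 3 P, (cover M T - 1) :=
    sum_nonneg fun T hT => sub_nonneg.mpr (one_le_cover hodd (mem_supersets.mp hT).1.le)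
  have hcast := Nat.cast_sum (R := ℤ) (supersets 3 P)
    fun T => #((supersets 4 T).filter (M · ≠ 0)) - 1
  rw [sum_congr rfl hcover, hsum] at hcast
  refine ⟨2 * k.toNat - 4, by omega, by omega⟩

end Twelve

end BooleanCube

namespace IsEqPartition

open BooleanCube

lemma sum_assoc_add_single {n : ℕ} {C0 : Finset (Vtx n)} {a b c d : ℕ}
    (h : IsEqPartition C0 a b c d) (hreg : a + b = c + d) (x : Vtx n) :
    ∑ i, assoc C0 b c (x + Pi.single i 1) = ((a : ℚ) - c) * assoc C0 b c x := by
  rw [← sum_adj, sum_assoc, filter_filter, filter_filter]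
  by_cases hx : x ∈ C0
  · simp only [(h.1 x hx).1, (h.1 x hx).2, assoc, hx, if_true]
    ring
  · simp only [(h.2 x hx).1, (h.2 x hx).2, assoc, hx, if_false]
    have : (a : ℚ) + b = c + d := by exact_mod_cast hreg
    linear_combination (c : ℚ) * this

section Q12

variable {C0 : Finset (Vtx 12)} (h : IsEqPartition C0 3 9 7 5)
include h

lemma wt_eq_eight_of_hat_ne_zero {y : Vtx 12} (hy : hat (assoc C0 9 7) y ≠ 0) : wt y = 8 := by
  have := BooleanCube.wt_of_hat_ne_zero (h.sum_assoc_add_single (by norm_num)) hy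
  push_cast at this
  exact_mod_cast (by linarith : (wt y : ℚ) = 8)

lemma card_zeros_of_hat_ne_zero {y : Vtx 12} (hy : hat (assoc C0 9 7) y ≠ 0) :
    #(zeros y) = 4 := by
  have := card_zeros_add_wt y
  rw [h.wt_eq_eight_of_hat_ne_zero hy] at this
  omega

lemma sum_assoc_eq_zero : ∑ x, assoc C0 9 7 x = 0 := by
  have h0 : hat (assoc C0 9 7) 0 = 0 := by
    by_contra h0
    simpa [wt] using h.wt_eq_eight_of_hat_ne_zero h0
  change (∑ x, assoc C0 9 7 x * chi 0 x) / 2 ^ 12 = 0 at h0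
  simpa [chi_comm 0, chi_zero_right] using h0

lemma sum_supersets_hat {U : Finset (Fin 12)} (hU : #U ≤ 4) :
    ∑ S ∈ supersets 4 U, hat (assoc C0 9 7) (ofZeros S) = 2 ^ (4 - #U) * faceCount C0 U - 7 := by
  rw [← sum_vanishing_eq_sum_supersets _ (fun y => h.card_zeros_of_hat_ne_zero),
    sum_vanishing_hat_assoc]
  rw [show (2 : ℚ) ^ (4 - #U) = 2 ^ 4 / 2 ^ #U by
    rw [eq_div_iff (by positivity), ← pow_add, Nat.sub_add_cancel hU]]
  push_cast
  ring

lemma hat_ofZeros {S : Finset (Fin 12)} (hS : #S = 4) :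
    hat (assoc C0 9 7) (ofZeros S) = blockCoeff C0 S := by
  have := h.sum_supersets_hat hS.le
  rw [← hS, supersets_card_self, sum_singleton, hS] at this
  rw [this, blockCoeff]
  push_cast
  ring

lemma sum_supersets_blockCoeff {U : Finset (Fin 12)} (hU : #U ≤ 4) :
    ∑ S ∈ supersets 4 U, blockCoeff C0 S = 2 ^ (4 - #U) * faceCount C0 U - 7 := by
  have := h.sum_supersets_hat hU
  rw [sum_congr rfl fun S hS => h.hat_ofZeros (mem_supersets.mp hS).1] at this
  exact_mod_cast this

lemma odd_sum_supersets_blockCoeff {U : Finset (Fin 12)} (hU : #U ≤ 3) :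
    Odd (∑ S ∈ supersets 4 U, blockCoeff C0 S) := by
  rw [h.sum_supersets_blockCoeff (by omega), show 4 - #U = (3 - #U) + 1 by omega, pow_succ]
  exact ⟨2 ^ (3 - #U) * faceCount C0 U - 4, by ring⟩

lemma sum_vanishing_singleton_hat_sq (i : Fin 12) :
    ∑ y ∈ vanishing {i}, hat (assoc C0 9 7) y ^ 2 = 21 := by
  set f := assoc C0 9 7
  set r : Vtx 12 → ℚ := fun x => (f x + f (x + Pi.single i 1)) / 2
  have hr (x : Vtx 12) : r x = ∑ y ∈ vanishing {i}, hat f y * chi y x := by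
    rw [sum_vanishing_hat_mul_chi, vanishing_compl_singleton,
      sum_pair (fun h0 => by simpa using congrFun h0 i)]
    simp [r, add_comm]
  have hr1 : ∑ x, r x = 0 := by
    have htranslate : ∑ x, f (x + Pi.single i 1) = ∑ x, f x :=
      Equiv.sum_comp (Equiv.addRight (Pi.single i 1)) f
    simp only [r, ← sum_div, sum_add_distrib, htranslate, f, h.sum_assoc_eq_zero]
    norm_num
  have hr2 : ∑ x, r x ^ 2 = 2 ^ 12 * ∑ y ∈ vanishing {i}, hat f y ^ 2 := by
    simp only [hr, sum_sq_sum_mul_chi]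
  have hr3 : ∑ x, r x ^ 3 = 0 := by
    simp only [hr]
    refine sum_cube_sum_mul_chi _ _ fun y₁ h₁ y₂ h₂ y₃ h₃ n₁ n₂ n₃ hsum => ?_
    have := wt_add_wt_add_wt_le hsum (mem_vanishing.mp h₁ i (mem_singleton_self i))
      (mem_vanishing.mp h₂ i (mem_singleton_self i))
    rw [h.wt_eq_eight_of_hat_ne_zero n₁, h.wt_eq_eight_of_hat_ne_zero n₂,
      h.wt_eq_eight_of_hat_ne_zero n₃] at this
    omega
  have hroots (x : Vtx 12) : r x ^ 3 = 3 * r x ^ 2 + 61 * r x - 63 := by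
    simp only [r, f, assoc]
    split_ifs <;> norm_num
  have := sum_congr rfl fun x (_ : x ∈ univ) => hroots x
  simp only [sum_sub_distrib, sum_add_distrib, ← mul_sum, hr1, hr2, hr3, sum_const, card_univ,
    Fintype.card_fun, ZMod.card, Fintype.card_fin, nsmul_eq_mul, Nat.cast_pow,
    Nat.cast_ofNat] at this
  linarith

lemma sum_supersets_singleton_blockCoeff_sq (i : Fin 12) :
    ∑ S ∈ supersets 4 {i}, blockCoeff C0 S ^ 2 = 21 := by
  have := h.sum_vanishing_singleton_hat_sq i
  rw [sum_vanishing_eq_sum_supersets (fun y => hat (assoc C0 9 7) y ^ 2)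
    (fun y hy => h.card_zeros_of_hat_ne_zero (pow_ne_zero_iff two_ne_zero |>.mp hy)),
    sum_congr rfl fun S hS => by rw [h.hat_ofZeros (mem_supersets.mp hS).1]] at this
  exact_mod_cast this

lemma cnt_eq_card_filter_blockCoeff_ne_zero (T : Finset (Fin 12)) :
    cnt C0 T = #((supersets 4 T).filter (blockCoeff C0 · ≠ 0)) := by
  have hfilter : (nonzeros C0).filter (fun x => ∀ i ∈ T, x i = 0)
      = (vanishing T).filter (hat (assoc C0 9 7) · ≠ 0) := by
    ext y
    simp [nonzeros, mem_vanishing, and_comm]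
  rw [cnt, hfilter, card_filter, card_filter,
    sum_vanishing_eq_sum_supersets _ (fun y hy => h.card_zeros_of_hat_ne_zero (by simpa using hy))]
  refine sum_congr rfl fun S hS => ?_
  simp [h.hat_ofZeros (mem_supersets.mp hS).1]

end Q12

end IsEqPartition

open BooleanCube in
theorem stmt17 (C0 : Finset (Vtx 12)) (h : IsEqPartition C0 3 9 7 5) :
    ∀ i j : Fin 12, i ≠ j →
      ∃ m : ℕ, (m = 0 ∨ m = 2 ∨ m = 4) ∧
        ∑ T ∈ (Finset.powersetCard 3 (Finset.univ : Finset (Fin 12))).filter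
            (fun T => i ∈ T ∧ j ∈ T), (cnt C0 T - 1) = 2 * m := by
  intro i j hij
  have hpair : (powersetCard 3 univ).filter (fun T => i ∈ T ∧ j ∈ T) = supersets 3 {i, j} := by
    ext T
    simp [mem_supersets, insert_subset_iff]
  simp only [hpair, h.cnt_eq_card_filter_blockCoeff_ne_zero]
  exact exists_sum_supersets_pair h.sum_supersets_singleton_blockCoeff_sq
    (fun U hU => h.odd_sum_supersets_blockCoeff hU) {i, j} (card_pair hij)
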